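/- Let τ = {(0,0)} ∪ {(t, t·sin(1/t)) : 0 < t ≤ 1} ⊆ ℝ² and let g : τ → ℝ be g(x, y) = y. Let h : [0,1] → τ be any homeomorphism from [0,1] (identified with [0,1] × {0}) onto τ. Then the function f = g ∘ h : [0,1] → ℝ has unbounded classical total variation on [0,1]. -/

import Mathlib

open scoped ENNReal
open Set Filter Topology Real

/-!
Graphing `x ↦ x sin (1 / x)` over `[0, 1]` gives a homeomorphism `φ : [0, 1] ≃ τ`, so `h⁻¹ ∘ φ`
is a self-homeomorphism of `[0, 1]`, hence strictly monotone or strictly antitone, and such a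
reparametrisation does not change total variation. So `f` has the total variation of
`x sin (1 / x)` on `[0, 1]`, which is infinite: at the points `1 / (kπ + π / 2)` the function
takes the values `± 1 / (kπ + π / 2)` with alternating signs, and these heights form a divergent
series.
-/

namespace eVariationOn

variable {α β E : Type*} [LinearOrder α] [PseudoEMetricSpace E]

theorem sum_le_of_antitone {f : α → E} {s : Set α} {u : ℕ → α} (hu : Antitone u)
    (us : ∀ i, u i ∈ s) (n : ℕ) :
    ∑ i ∈ Finset.range n, edist (f (u (i + 1))) (f (u i)) ≤ eVariationOn f s := by
  rw [← comp_ofDual]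
  exact sum_le (f := f ∘ OrderDual.ofDual) hu.dual_right us

theorem eq_top_of_antitone {f : α → E} {s : Set α} {u : ℕ → α} (hu : Antitone u)
    (us : ∀ i, u i ∈ s) {a : ℕ → ℝ} (ha_nonneg : ∀ i, 0 ≤ a i)
    (ha : ∀ i, ENNReal.ofReal (a i) ≤ edist (f (u (i + 1))) (f (u i)))
    (ha_sum : Tendsto (fun n => ∑ i ∈ Finset.range n, a i) atTop atTop) :
    eVariationOn f s = ⊤ := by
  refine ENNReal.eq_top_of_forall_nnreal_le fun r => ?_
  obtain ⟨n, hn⟩ := (ha_sum.eventually_ge_atTop r).exists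
  calc (r : ℝ≥0∞) = ENNReal.ofReal r := (ENNReal.ofReal_coe_nnreal).symm
    _ ≤ ENNReal.ofReal (∑ i ∈ Finset.range n, a i) := ENNReal.ofReal_le_ofReal hn
    _ = ∑ i ∈ Finset.range n, ENNReal.ofReal (a i) :=
        ENNReal.ofReal_sum_of_nonneg fun i _ => ha_nonneg i
    _ ≤ ∑ i ∈ Finset.range n, edist (f (u (i + 1))) (f (u i)) :=
        Finset.sum_le_sum fun i _ => ha i
    _ ≤ eVariationOn f s := sum_le_of_antitone hu us n

theorem comp_subtype_val (f : α → E) (s : Set α) :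
    eVariationOn (f ∘ Subtype.val) (univ : Set ↥s) = eVariationOn f s := by
  rw [comp_eq_of_monotoneOn f _ ((Subtype.mono_coe (· ∈ s)).monotoneOn _), image_univ,
    Subtype.range_coe]

theorem comp_homeomorph [TopologicalSpace α] [OrderClosedTopology α]
    [ConditionallyCompleteLinearOrder β] [TopologicalSpace β] [OrderTopology β]
    [DenselyOrdered β]
    (f : α → E) (e : β ≃ₜ α) : eVariationOn (f ∘ e) univ = eVariationOn f univ := by
  rcases e.continuous.strictMono_of_inj e.injective with he | he
  · rw [comp_eq_of_monotoneOn f e (he.monotone.monotoneOn _), image_univ, e.range_coe]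
  · rw [comp_eq_of_antitoneOn f e (he.antitone.antitoneOn _), image_univ, e.range_coe]

end eVariationOn

theorem continuous_mul_sin_one_div : Continuous fun x : ℝ => x * sin (1 / x) := by
  rw [continuous_iff_continuousAt]
  intro x
  rcases eq_or_ne x 0 with rfl | hx
  · suffices Tendsto (fun x : ℝ => x * sin (1 / x)) (𝓝 0) (𝓝 0) by simpa [ContinuousAt]
    refine squeeze_zero_norm (fun x => ?_) (continuous_abs.tendsto' 0 0 abs_zero)
    simpa [abs_mul] using mul_le_of_le_one_right (abs_nonneg x) (abs_sin_le_one (1 / x))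
  · exact continuousAt_id.mul
      (continuous_sin.continuousAt.comp (continuousAt_const.div continuousAt_id hx))

theorem eVariationOn_mul_sin_one_div_Icc :
    eVariationOn (fun x : ℝ => x * sin (1 / x)) (Icc 0 1) = ⊤ := by
  set u : ℕ → ℝ := fun k => 1 / (k * π + π / 2)
  have hu_pos (k : ℕ) : 0 < u k := by positivity
  have hu_anti : Antitone u := fun a b hab =>
    one_div_le_one_div_of_le (by positivity) (by gcongr)
  have hu_mem (k : ℕ) : u k ∈ Icc 0 1 := by
    refine ⟨(hu_pos k).le, (div_le_one (by positivity)).2 ?_⟩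
    nlinarith [pi_gt_three, (Nat.cast_nonneg k : (0 : ℝ) ≤ k)]
  have hu_val (k : ℕ) : u k * sin (1 / u k) = (-1) ^ k * u k := by
    rw [one_div_one_div, sin_add_pi_div_two, cos_nat_mul_pi, mul_comm]
  have hu_jump (k : ℕ) : ENNReal.ofReal (u k) ≤
      edist (u (k + 1) * sin (1 / u (k + 1))) (u k * sin (1 / u k)) := by
    rw [edist_dist, Real.dist_eq, hu_val, hu_val]
    refine ENNReal.ofReal_le_ofReal ?_
    calc u k ≤ u (k + 1) + u k := le_add_of_nonneg_left (hu_pos _).le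
      _ = |(-1) ^ (k + 1) * (u (k + 1) + u k)| := by
          rw [abs_mul, abs_pow, abs_neg, abs_one, one_pow, one_mul,
            abs_of_pos (add_pos (hu_pos _) (hu_pos _))]
      _ = |(-1) ^ (k + 1) * u (k + 1) - (-1) ^ k * u k| := by ring_nf
  have hu_harmonic (k : ℕ) : π⁻¹ * (1 / (k + 1)) ≤ u k := by
    rw [← one_div, div_mul_div_comm, one_mul]
    exact one_div_le_one_div_of_le (by positivity) (by nlinarith [pi_pos])
  refine eVariationOn.eq_top_of_antitone hu_anti hu_mem (fun k => (hu_pos k).le) hu_jump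
    (tendsto_atTop_mono (fun n => Finset.sum_le_sum fun k _ => hu_harmonic k) ?_)
  simp_rw [← Finset.mul_sum]
  exact Real.tendsto_sum_range_one_div_nat_succ_atTop.const_mul_atTop (inv_pos.2 pi_pos)

theorem range_graph_mul_sin_one_div_Icc :
    range (fun x : Icc (0 : ℝ) 1 => ((x : ℝ), (x : ℝ) * sin (1 / x))) =
      {((0 : ℝ), (0 : ℝ))} ∪
        {p : ℝ × ℝ | ∃ t : ℝ, 0 < t ∧ t ≤ 1 ∧ p = (t, t * Real.sin (1 / t))} := by
  ext p
  constructor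
  · rintro ⟨⟨x, hx0, hx1⟩, rfl⟩
    rcases hx0.eq_or_lt with rfl | hx0
    · simp
    · exact Or.inr ⟨x, hx0, hx1, rfl⟩
  · rintro (rfl | ⟨t, ht0, ht1, rfl⟩)
    · exact ⟨⟨0, le_rfl, zero_le_one⟩, by simp⟩
    · exact ⟨⟨t, ht0.le, ht1⟩, rfl⟩

/-- Let `τ = {(0,0)} ∪ {(t, t sin(1/t)) : 0 < t ≤ 1}`, `g(x,y) = y`, and let
`h : [0,1] ≃ₜ τ` be any homeomorphism. Then `f = g ∘ h` has unbounded (infinite)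
classical total variation on `[0,1]`. -/
theorem composition_with_homeomorphism_unbounded_variation
    (τ : Set (ℝ × ℝ))
    (hτ : τ = {((0 : ℝ), (0 : ℝ))} ∪
      {p : ℝ × ℝ | ∃ t : ℝ, 0 < t ∧ t ≤ 1 ∧ p = (t, t * Real.sin (1 / t))})
    (h : (Set.Icc (0 : ℝ) 1) ≃ₜ τ) :
    eVariationOn (fun t : Set.Icc (0 : ℝ) 1 => ((h t : ℝ × ℝ)).2) Set.univ = ⊤ := by
  subst hτ
  let graph : Icc (0 : ℝ) 1 ≃ₜ _ :=
    ((isEmbedding_graph continuous_mul_sin_one_div).comp .subtypeVal).toHomeomorph.trans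
      (.setCongr range_graph_mul_sin_one_div_Icc)
  calc eVariationOn (fun t : Icc (0 : ℝ) 1 => ((h t : ℝ × ℝ)).2) univ
      = eVariationOn ((fun t => ((h t : ℝ × ℝ)).2) ∘ graph.trans h.symm) univ :=
        (eVariationOn.comp_homeomorph _ _).symm
    _ = eVariationOn ((fun x : ℝ => x * sin (1 / x)) ∘ Subtype.val) univ := by
        congr 1
        ext x
        simp only [Function.comp_apply, Homeomorph.trans_apply, Homeomorph.apply_symm_apply]
        rfl
    _ = ⊤ := by rw [eVariationOn.comp_subtype_val, eVariationOn_mul_sin_one_div_Icc]
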